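/- arXiv:2210.05943 — 3 statements merged into one kernel-verified Lean document; each statement's English description precedes it below -/
import Mathlib

section
/- Let n ≥ 3 be an odd integer, p ≥ 2 an integer, and ξ ∈ ℝ with ξ ≠ 0. Define H : ℝ^{p-1} → ℝ by H(η₁, …, η_{p-1}) = ξ^n - η₁^n - ⋯ - η_{p-1}^n - (ξ - η₁ - ⋯ - η_{p-1})^n. Then the gradient ∇H vanishes at (η₁, …, η_{p-1}) if and only if there exists an integer j with 0 ≤ j ≤ p-1 and p - 2j - 2 ≠ 0 such that exactly j of the coordinates η₁, …, η_{p-1} equal -ξ/(p-2j-2) and the remaining p-1-j coordinates equal ξ/(p-2j-2). -/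
/-!
Writing `σ = ξ - Σ ηᵢ`, the partial derivatives are `∂H/∂ηᵢ = n (σⁿ⁻¹ - ηᵢⁿ⁻¹)`, and since `n - 1`
is even they all vanish exactly when every `ηᵢ = ±σ`. If `j` coordinates equal `σ`, then
`Σ ηᵢ = (2j - (p - 1)) σ`, so the defining relation of `σ` becomes the linear equation
`(p - 2j - 2) σ = -ξ`; as `ξ ≠ 0`, this holds iff `p - 2j - 2 ≠ 0` and `σ = -ξ / (p - 2j - 2)`.
-/

open Real

/-- The resonance phase `H(η) = ξⁿ - Σᵢ ηᵢⁿ - (ξ - Σᵢ ηᵢ)ⁿ`. -/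
noncomputable def resPhase (n p : ℕ) (ξ : ℝ) (η : Fin (p - 1) → ℝ) : ℝ :=
  ξ ^ n - (∑ i, η i ^ n) - (ξ - ∑ i, η i) ^ n

open Finset

section
variable {ι : Type*} [Fintype ι]

theorem sum_smul_proj_eq_zero_iff {R : Type*} [CommSemiring R] [TopologicalSpace R]
    [IsTopologicalSemiring R] (g : ι → R) :
    ∑ i, g i • ContinuousLinearMap.proj (R := R) (φ := fun _ : ι => R) i = 0 ↔ g = 0 := by
  classical
  refine ⟨fun h => funext fun i => ?_, fun h => by ext; simp [h]⟩
  simpa [Pi.single_apply] using congr($h (Pi.single i 1))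

theorem hasFDerivAt_resonance (n : ℕ) (ξ : ℝ) (η : ι → ℝ) :
    HasFDerivAt (fun y : ι → ℝ => ξ ^ n - ∑ i, y i ^ n - (ξ - ∑ i, y i) ^ n)
      (∑ i, ((n : ℝ) * ((ξ - ∑ k, η k) ^ (n - 1) - η i ^ (n - 1))) •
        ContinuousLinearMap.proj (R := ℝ) (φ := fun _ : ι => ℝ) i) η := by
  have hsum : HasFDerivAt (fun y : ι → ℝ => ∑ i, y i)
      (∑ i, ContinuousLinearMap.proj (R := ℝ) (φ := fun _ : ι => ℝ) i) η :=
    HasFDerivAt.fun_sum fun i _ => hasFDerivAt_apply i η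
  have hpows := HasFDerivAt.fun_sum (u := univ) fun i _ => (hasFDerivAt_apply (𝕜 := ℝ) i η).pow n
  refine (((hasFDerivAt_const (ξ ^ n) η).sub hpows).sub
    (((hasFDerivAt_const ξ η).sub hsum).pow n)).congr_fderiv ?_
  ext v
  simp only [nsmul_eq_mul, zero_sub, Pi.sub_apply, smul_neg, sub_neg_eq_add, add_apply, neg_apply,
    _root_.sum_apply, smul_apply, ContinuousLinearMap.proj_apply, smul_eq_mul, mul_sum, mul_sub,
    sub_mul, sum_sub_distrib]
  ring

theorem fderiv_resonance_eq_zero_iff {n : ℕ} (hn : n ≠ 1) (hodd : Odd n) (ξ : ℝ) (η : ι → ℝ) :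
    fderiv ℝ (fun y : ι → ℝ => ξ ^ n - ∑ i, y i ^ n - (ξ - ∑ i, y i) ^ n) η = 0 ↔
      ∀ i, η i = ξ - ∑ k, η k ∨ η i = -(ξ - ∑ k, η k) := by
  have heven : Even (n - 1) := hodd.tsub_odd odd_one
  have hn0 : (n : ℝ) ≠ 0 := by exact_mod_cast hodd.pos.ne'
  rw [(hasFDerivAt_resonance n ξ η).fderiv, sum_smul_proj_eq_zero_iff, funext_iff]
  refine forall_congr' fun i => ?_
  rw [Pi.zero_apply, mul_eq_zero, or_iff_right hn0, sub_eq_zero, eq_comm,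
    pow_eq_pow_iff_of_ne_zero (by have := hodd.pos; omega), and_iff_left heven]

variable [DecidableEq ι] {R : Type*}

def signPattern [Neg R] (s : Finset ι) (a : R) : ι → R :=
  fun i => if i ∈ s then a else -a

theorem forall_eq_or_eq_neg_iff_exists_signPattern [Neg R] (η : ι → R) (a : R) :
    (∀ i, η i = a ∨ η i = -a) ↔ ∃ s : Finset ι, η = signPattern s a := by
  classical
  refine ⟨fun h => ⟨univ.filter (η · = a), funext fun i => ?_⟩, ?_⟩
  · by_cases hi : η i = a
    · simp [signPattern, hi]
    · simp [signPattern, (h i).resolve_left hi]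
  · rintro ⟨s, rfl⟩ i
    by_cases hi : i ∈ s <;> simp [signPattern, hi]

theorem sum_signPattern [Ring R] (s : Finset ι) (a : R) :
    ∑ i, signPattern s a i = (2 * #s - Fintype.card ι) * a := by
  simp only [signPattern, sum_ite, subset_univ, filter_mem_eq_of_subset, sum_const, nsmul_eq_mul,
    filter_not, card_sdiff, card_univ, inter_univ, Nat.cast_sub (card_le_univ s)]
  noncomm_ring

theorem sub_sum_signPattern_eq_iff [CommRing R] (s : Finset ι) (ξ a : R) :
    ξ - ∑ i, signPattern s a i = a ↔ ((Fintype.card ι : R) - 2 * #s - 1) * a = -ξ := by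
  rw [sum_signPattern]
  constructor <;> intro h <;> linear_combination h

theorem mul_eq_neg_iff_eq_neg_div {K : Type*} [Field K] {ξ : K} (hξ : ξ ≠ 0) (c a : K) :
    c * a = -ξ ↔ c ≠ 0 ∧ a = -ξ / c := by
  refine ⟨fun h => ?_, fun ⟨hc, ha⟩ => by rw [ha, mul_div_cancel₀ _ hc]⟩
  have hc : c ≠ 0 := by rintro rfl; simp [eq_comm, hξ] at h
  exact ⟨hc, by rw [eq_div_iff hc, mul_comm, h]⟩

theorem forall_eq_or_eq_neg_sub_sum_iff {K : Type*} [Field K] {ξ : K} (hξ : ξ ≠ 0) (η : ι → K) :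
    (∀ i, η i = ξ - ∑ k, η k ∨ η i = -(ξ - ∑ k, η k)) ↔
      ∃ s : Finset ι, (Fintype.card ι : K) - 2 * #s - 1 ≠ 0 ∧
        η = signPattern s (-ξ / ((Fintype.card ι : K) - 2 * #s - 1)) := by
  rw [forall_eq_or_eq_neg_iff_exists_signPattern]
  constructor
  · rintro ⟨s, hs⟩
    have hfix : ξ - ∑ i, signPattern s (ξ - ∑ k, η k) i = ξ - ∑ k, η k := by rw [← hs]
    rw [sub_sum_signPattern_eq_iff, mul_eq_neg_iff_eq_neg_div hξ] at hfix
    exact ⟨s, hfix.1, hfix.2 ▸ hs⟩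
  · rintro ⟨s, hc, rfl⟩
    refine ⟨s, congrArg _ ?_⟩
    rw [eq_comm, sub_sum_signPattern_eq_iff, mul_eq_neg_iff_eq_neg_div hξ]
    exact ⟨hc, rfl⟩

end

theorem stationary_points_characterization (n : ℕ) (hn : 3 ≤ n) (hodd : Odd n)
    (p : ℕ) (hp : 2 ≤ p) (ξ : ℝ) (hξ : ξ ≠ 0) (η : Fin (p - 1) → ℝ) :
    fderiv ℝ (resPhase n p ξ) η = 0 ↔
      ∃ j : ℕ, j ≤ p - 1 ∧ (p : ℤ) - 2 * (j : ℤ) - 2 ≠ 0 ∧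
        ∃ s : Finset (Fin (p - 1)), s.card = j ∧
          ∀ i : Fin (p - 1),
            η i = if i ∈ s then -ξ / ((p : ℝ) - 2 * (j : ℝ) - 2)
              else ξ / ((p : ℝ) - 2 * (j : ℝ) - 2) := by
  have hcard (j : ℕ) : (Fintype.card (Fin (p - 1)) : ℝ) - 2 * j - 1 = (p : ℝ) - 2 * j - 2 := by
    rw [Fintype.card_fin, Nat.cast_sub (by omega)]
    ring
  have hcast (j : ℕ) : (p : ℝ) - 2 * j - 2 ≠ 0 ↔ (p : ℤ) - 2 * (j : ℤ) - 2 ≠ 0 := by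
    norm_cast
  refine (fderiv_resonance_eq_zero_iff (by omega) hodd ξ η).trans ?_
  simp only [forall_eq_or_eq_neg_sub_sum_iff hξ, hcard, hcast]
  constructor
  · rintro ⟨s, hc, rfl⟩
    refine ⟨#s, (card_le_univ s).trans_eq (Fintype.card_fin _), hc, s, rfl, fun i => ?_⟩
    simp [signPattern, neg_div]
  · rintro ⟨_, -, hc, s, rfl, hη⟩
    refine ⟨s, hc, funext fun i => ?_⟩
    simp [signPattern, hη i, neg_div]
end

section
/- Let p ≥ 3 be an odd integer and let M₁ be the (p-1)×(p-1) real symmetric matrix with diagonal entries (M₁)ᵢᵢ = 2 for 1 ≤ i ≤ (p-1)/2, (M₁)ᵢᵢ = 0 for (p-1)/2 < i ≤ p-1, and off-diagonal entries (M₁)ᵢ_k = 1 for all i ≠ k. Then M₁ has exactly (p-1)/2 positive eigenvalues and exactly (p-1)/2 negative eigenvalues (counted with multiplicity); in particular the signature of M₁ is 0. -/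
/-!
With `m = (p - 1) / 2`, the matrix `x • 1 - M₁` is `D - 𝟙𝟙ᵀ` where `D` is diagonal with entries
`x - 1` (first `m` slots) and `x + 1` (last `m` slots). The matrix determinant lemma gives
`det (D - 𝟙𝟙ᵀ) = det D * (1 - ∑ 1 / Dᵢᵢ)`, so the characteristic polynomial is
`(x - 1)^(m-1) (x + 1)^(m-1) (x² - 2 m x - 1)`. Its last factor has roots `m ± √(m² + 1)`, one of
each sign, so `m` eigenvalues are positive and `m` are negative.
-/

open Polynomial

/-- The matrix `M₁`: diagonal entries `2` in the first `(p-1)/2` slots, `0` afterwards,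
and off-diagonal entries all `1`. -/
noncomputable def Mone (p : ℕ) : Matrix (Fin (p - 1)) (Fin (p - 1)) ℝ :=
  Matrix.of fun i k => if i = k then (if (i : ℕ) < (p - 1) / 2 then (2 : ℝ) else 0) else 1

open Matrix Finset

theorem det_diagonal_sub_of_one {K ι : Type*} [Field K] [Fintype ι] [DecidableEq ι]
    (d : ι → K) (hd : ∀ i, d i ≠ 0) :
    (diagonal d - of fun _ _ => (1 : K)).det = (∏ i, d i) * (1 - ∑ i, (d i)⁻¹) := by
  have hfactor : diagonal d - of (fun _ _ => (1 : K)) = diagonal d *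
      (1 + replicateCol Unit (fun i => -(d i)⁻¹) * replicateRow Unit (fun _ => (1 : K))) := by
    ext i j
    rw [diagonal_mul]
    rcases eq_or_ne i j with rfl | hij
    · simp [Matrix.mul_apply, mul_add, mul_inv_cancel₀ (hd i), sub_eq_add_neg]
    · simp [Matrix.mul_apply, hij, mul_inv_cancel₀ (hd i)]
  rw [hfactor, det_mul, det_diagonal, det_one_add_replicateCol_mul_replicateRow]
  simp [dotProduct, sub_eq_add_neg]

@[to_additive]
theorem Fin.prod_ite_val_lt {M : Type*} [CommMonoid M] {n m : ℕ} (hm : m ≤ n) (a b : M) :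
    ∏ i : Fin n, (if (i : ℕ) < m then a else b) = a ^ m * b ^ (n - m) := by
  rw [prod_ite, Finset.prod_const, Finset.prod_const, Fin.card_filter_val_lt, min_eq_right hm,
    filter_not, card_sdiff_of_subset (filter_subset _ _), Fin.card_filter_val_lt, min_eq_right hm,
    card_univ, Fintype.card_fin]

theorem Multiset.card_filter_replicate {α : Type*} (q : α → Prop) [DecidablePred q] (k : ℕ)
    (a : α) : card ((replicate k a).filter q) = if q a then k else 0 := by
  split_ifs with h
  · rw [filter_eq_self.mpr fun b hb => eq_of_mem_replicate hb ▸ h, card_replicate]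
  · rw [filter_eq_nil.mpr fun b hb => eq_of_mem_replicate hb ▸ h, card_zero]

theorem abs_lt_sqrt_sq_add_one (c : ℝ) : |c| < √(c ^ 2 + 1) :=
  (Real.lt_sqrt (abs_nonneg c)).mpr (by rw [sq_abs]; linarith)

theorem scalar_sub_Mone (p : ℕ) (x : ℝ) :
    scalar (Fin (p - 1)) x - Mone p =
      diagonal (fun i : Fin (p - 1) => if (i : ℕ) < (p - 1) / 2 then x - 1 else x + 1) -
        of fun _ _ => (1 : ℝ) := by
  ext i j
  rcases eq_or_ne i j with rfl | hij
  · by_cases hi : (i : ℕ) < (p - 1) / 2 <;> simp [Mone, hi]; ring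
  · simp [Mone, hij]

theorem eval_charpoly_Mone {p k : ℕ} (hk : p - 1 = 2 * (k + 1)) {x : ℝ} (h1 : x ≠ 1)
    (h2 : x ≠ -1) :
    (Mone p).charpoly.eval x = (x - 1) ^ k * (x + 1) ^ k * (x ^ 2 - 2 * (k + 1) * x - 1) := by
  have hhalf : (p - 1) / 2 = k + 1 := by omega
  have h1' : x - 1 ≠ 0 := sub_ne_zero.mpr h1
  have h2' : x + 1 ≠ 0 := by rwa [← sub_neg_eq_add, sub_ne_zero]
  rw [eval_charpoly, scalar_sub_Mone,
    det_diagonal_sub_of_one _ (fun i => by split_ifs <;> assumption)]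
  simp only [apply_ite (·⁻¹), hhalf]
  rw [Fin.prod_ite_val_lt (by omega), Fin.sum_ite_val_lt (by omega), hk,
    show 2 * (k + 1) - (k + 1) = k + 1 by omega, nsmul_eq_mul, nsmul_eq_mul, pow_succ, pow_succ]
  push_cast
  field_simp
  ring

/-- The spectrum of `Mone p` for `p = 2 * k + 3`. -/
noncomputable def MoneEigenvalues (k : ℕ) : Multiset ℝ :=
  Multiset.replicate k 1 + Multiset.replicate k (-1) +
    {k + 1 + √((k + 1) ^ 2 + 1), k + 1 - √((k + 1) ^ 2 + 1)}

theorem charpoly_Mone {p k : ℕ} (hk : p - 1 = 2 * (k + 1)) :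
    (Mone p).charpoly = ((MoneEigenvalues k).map fun a => X - C a).prod := by
  refine eq_of_infinite_eval_eq _ _ ((Set.toFinite {1, -1}).infinite_compl.mono fun x hx => ?_)
  simp only [Set.mem_compl_iff, Set.mem_insert_iff, Set.mem_singleton_iff, not_or] at hx
  rw [Set.mem_ofPred_eq, eval_charpoly_Mone hk hx.1 hx.2, eval_multiset_prod]
  simp only [MoneEigenvalues, Multiset.insert_eq_cons, Multiset.add_cons, Multiset.map_cons,
    map_add, map_natCast, map_one, Multiset.map_add, Multiset.map_replicate, map_neg,
    sub_neg_eq_add, Multiset.map_singleton, map_sub, eval_sub, eval_X, eval_add, eval_natCast,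
    eval_one, eval_C, Multiset.prod_cons, Multiset.prod_add, Multiset.prod_replicate,
    Multiset.prod_singleton]
  linear_combination
    (x - 1) ^ k * (x + 1) ^ k * Real.sq_sqrt (by positivity : (0 : ℝ) ≤ (k + 1) ^ 2 + 1)

theorem roots_charpoly_Mone {p k : ℕ} (hk : p - 1 = 2 * (k + 1)) :
    (Mone p).charpoly.roots = MoneEigenvalues k := by
  rw [charpoly_Mone hk, roots_multiset_prod_X_sub_C]

theorem Mone_signature_zero (p : ℕ) (hp : 3 ≤ p) (hpodd : Odd p) :
    Multiset.card ((Mone p).charpoly.roots.filter fun x => 0 < x) = (p - 1) / 2 ∧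
      Multiset.card ((Mone p).charpoly.roots.filter fun x => x < 0) = (p - 1) / 2 := by
  obtain ⟨k, hk⟩ : ∃ k, p - 1 = 2 * (k + 1) := by
    obtain ⟨t, rfl⟩ := hpodd
    exact ⟨t - 1, by omega⟩
  have hsqrt := abs_lt_sqrt_sq_add_one ((k : ℝ) + 1)
  have hpos : 0 < (k : ℝ) + 1 + √(((k : ℝ) + 1) ^ 2 + 1) := by linarith [neg_abs_le ((k : ℝ) + 1)]
  have hneg : (k : ℝ) + 1 - √(((k : ℝ) + 1) ^ 2 + 1) < 0 := by linarith [le_abs_self ((k : ℝ) + 1)]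
  rw [roots_charpoly_Mone hk, show (p - 1) / 2 = k + 1 by omega]
  constructor <;>
    simp [MoneEigenvalues, Multiset.filter_add, Multiset.filter_singleton,
      Multiset.card_filter_replicate, hpos, hneg, lt_asymm hpos, lt_asymm hneg]
end

section
/- Weighted L¹ interpolation bound: for every ρ with 0 ≤ ρ < 1/4 there is a constant C = C(ρ) such that for every Schwartz function f : ℝ → ℂ, ∫_ℝ |x|^{2ρ} |f(x)| dx ≤ C ‖f‖_{L²(ℝ)}^{1/2 - 2ρ} ‖x f(x)‖_{L²(ℝ)}^{1/2 + 2ρ}. -/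
/-!
Split the line at `|x| = R`. Near the origin, Cauchy–Schwarz against the bounded weight `|x| ^ s`
gives `∫ |x| ^ s ‖f‖ ≲ R ^ (s + 1/2) ‖f‖₂`; away from it, writing `|x| ^ s = |x| ^ (s - 1) · |x|`
and using that `|x| ^ (2s - 2)` is integrable at infinity (this is where `s < 1/2` enters) gives
`≲ R ^ (s - 1/2) ‖x f‖₂`. The choice `R = ‖x f‖₂ / ‖f‖₂` makes both terms equal to
`‖f‖₂ ^ (1/2 - s) ‖x f‖₂ ^ (1/2 + s)`.
-/

open MeasureTheory Real Set Metric

lemma integral_abs_rpow_closedBall_le {c R : ℝ} (hc : 0 ≤ c) (hR : 0 ≤ R) :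
    ∫ x in closedBall (0 : ℝ) R, |x| ^ c ≤ 2 * R ^ (c + 1) := by
  have hbound : ∀ x ∈ closedBall (0 : ℝ) R, ‖|x| ^ c‖ ≤ R ^ c := fun x hx => by
    rw [Real.norm_of_nonneg (by positivity)]
    exact rpow_le_rpow (abs_nonneg x) (by simpa using hx) hc
  calc ∫ x in closedBall (0 : ℝ) R, |x| ^ c
      ≤ R ^ c * volume.real (closedBall (0 : ℝ) R) :=
        (le_abs_self _).trans
          (norm_setIntegral_le_of_norm_le_const measure_closedBall_lt_top hbound)
    _ = 2 * R ^ (c + 1) := by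
        rw [Real.volume_real_closedBall hR, rpow_add_one' hR (by linarith)]; ring

lemma integrableOn_abs_rpow_closedBall {c : ℝ} (hc : 0 ≤ c) (R : ℝ) :
    IntegrableOn (fun x : ℝ => |x| ^ c) (closedBall 0 R) :=
  (continuous_abs.rpow_const fun _ => Or.inr hc).continuousOn.integrableOn_compact
    (isCompact_closedBall 0 R)

lemma integral_abs_rpow_compl_closedBall {c R : ℝ} (hc : c < -1) (hR : 0 < R) :
    ∫ x in (closedBall (0 : ℝ) R)ᶜ, |x| ^ c = 2 * (R ^ (c + 1) / -(c + 1)) := by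
  have hind : (closedBall (0 : ℝ) R)ᶜ.indicator (fun x => |x| ^ c) =
      fun x => (Ioi R).indicator (· ^ c) |x| := by
    ext x; simp [indicator]
  rw [← integral_indicator measurableSet_closedBall.compl, hind, integral_comp_abs,
    integral_indicator measurableSet_Ioi, Measure.restrict_restrict measurableSet_Ioi,
    Ioi_inter_Ioi, sup_of_le_left hR.le, integral_Ioi_rpow_of_lt hc hR, neg_div, div_neg]

lemma integrableOn_abs_rpow_compl_closedBall {c R : ℝ} (hc : c < -1) (hR : 0 < R) :
    IntegrableOn (fun x : ℝ => |x| ^ c) (closedBall 0 R)ᶜ := by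
  refine Integrable.of_integral_ne_zero ?_
  rw [integral_abs_rpow_compl_closedBall hc hR]
  have : 0 < R ^ (c + 1) / -(c + 1) := div_pos (rpow_pos_of_pos hR _) (by linarith)
  positivity

lemma integral_mul_le_sqrt_mul_sqrt_of_nonneg {α : Type*} [MeasurableSpace α] {μ : Measure α}
    {u v : α → ℝ} (hu0 : 0 ≤ u) (hv0 : 0 ≤ v) (hu : MemLp u 2 μ) (hv : MemLp v 2 μ) :
    ∫ a, u a * v a ∂μ ≤ √(∫ a, u a ^ 2 ∂μ) * √(∫ a, v a ^ 2 ∂μ) := by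
  have h := integral_mul_le_Lp_mul_Lq_of_nonneg Real.HolderConjugate.two_two
    (.of_forall hu0) (.of_forall hv0) (by simpa using hu) (by simpa using hv)
  simpa only [rpow_two, sqrt_eq_rpow] using h

lemma abs_rpow_sq (x s : ℝ) : (|x| ^ s) ^ 2 = |x| ^ (2 * s) := by
  rw [← rpow_mul_natCast (abs_nonneg x)]; ring_nf

section WeightedCauchySchwarz

variable {E : Type*} [NormedAddCommGroup E] {g : ℝ → E} {s R : ℝ}

lemma setIntegral_closedBall_abs_rpow_mul_norm_le (hs : 0 ≤ s) (hR : 0 ≤ R) (hg : MemLp g 2) :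
    ∫ x in closedBall 0 R, |x| ^ s * ‖g x‖ ≤
      √2 * R ^ (s + 1 / 2) * √(∫ x, ‖g x‖ ^ 2) := by
  have hw : MemLp (fun x : ℝ => |x| ^ s) 2 (volume.restrict (closedBall 0 R)) :=
    (memLp_two_iff_integrable_sq
      (measurable_abs.pow_const _).aestronglyMeasurable).2 <| by
      simp_rw [abs_rpow_sq]; exact integrableOn_abs_rpow_closedBall (by positivity) R
  calc ∫ x in closedBall 0 R, |x| ^ s * ‖g x‖
      ≤ √(∫ x in closedBall 0 R, (|x| ^ s) ^ 2) * √(∫ x in closedBall 0 R, ‖g x‖ ^ 2) :=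
        integral_mul_le_sqrt_mul_sqrt_of_nonneg (fun x => by positivity) (fun x => norm_nonneg _)
          hw (hg.norm.restrict _)
    _ ≤ √(2 * R ^ (2 * s + 1)) * √(∫ x, ‖g x‖ ^ 2) := by
        simp only [abs_rpow_sq]
        gcongr √?_ * √?_
        · exact integral_abs_rpow_closedBall_le (by positivity) hR
        · exact setIntegral_le_integral (hg.integrable_norm_pow two_ne_zero)
            (.of_forall fun x => by positivity)
    _ = √2 * R ^ (s + 1 / 2) * √(∫ x, ‖g x‖ ^ 2) := by
        rw [sqrt_mul zero_le_two, sqrt_eq_rpow (R ^ _), ← rpow_mul hR]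
        ring_nf

lemma setIntegral_compl_closedBall_abs_rpow_mul_norm_le [NormedSpace ℝ E] (hs : s < 1 / 2)
    (hR : 0 < R) (hxg : MemLp (fun x => x • g x) 2) :
    ∫ x in (closedBall 0 R)ᶜ, |x| ^ s * ‖g x‖ ≤
      √(2 / (1 - 2 * s)) * R ^ (s - 1 / 2) * √(∫ x, ‖x • g x‖ ^ 2) := by
  have hw : MemLp (fun x : ℝ => |x| ^ (s - 1)) 2 (volume.restrict (closedBall 0 R)ᶜ) :=
    (memLp_two_iff_integrable_sq
      (measurable_abs.pow_const _).aestronglyMeasurable).2 <| by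
      simp_rw [abs_rpow_sq]; exact integrableOn_abs_rpow_compl_closedBall (by linarith) hR
  have htail : ∫ x in (closedBall (0 : ℝ) R)ᶜ, |x| ^ (2 * (s - 1)) =
      2 / (1 - 2 * s) * R ^ (2 * s - 1) := by
    rw [integral_abs_rpow_compl_closedBall (by linarith) hR]
    ring_nf
  calc ∫ x in (closedBall 0 R)ᶜ, |x| ^ s * ‖g x‖
      = ∫ x in (closedBall 0 R)ᶜ, |x| ^ (s - 1) * ‖x • g x‖ := by
        refine setIntegral_congr_fun measurableSet_closedBall.compl fun x hx => ?_
        have hx0 : |x| ≠ 0 := (hR.trans (by simpa using hx)).ne'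
        rw [norm_smul, Real.norm_eq_abs, ← mul_assoc, ← rpow_add_one hx0, sub_add_cancel]
    _ ≤ √(∫ x in (closedBall 0 R)ᶜ, (|x| ^ (s - 1)) ^ 2) *
          √(∫ x in (closedBall 0 R)ᶜ, ‖x • g x‖ ^ 2) :=
        integral_mul_le_sqrt_mul_sqrt_of_nonneg (fun x => by positivity) (fun x => norm_nonneg _)
          hw (hxg.norm.restrict _)
    _ ≤ √(2 / (1 - 2 * s) * R ^ (2 * s - 1)) * √(∫ x, ‖x • g x‖ ^ 2) := by
        simp only [abs_rpow_sq, htail]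
        gcongr √_ * √?_
        exact setIntegral_le_integral (hxg.integrable_norm_pow two_ne_zero)
          (.of_forall fun x => by positivity)
    _ = √(2 / (1 - 2 * s)) * R ^ (s - 1 / 2) * √(∫ x, ‖x • g x‖ ^ 2) := by
        rw [sqrt_mul (div_nonneg zero_le_two (by linarith)), sqrt_eq_rpow (R ^ _),
          ← rpow_mul hR.le]
        ring_nf

end WeightedCauchySchwarz

lemma integral_norm_sq_pos {α E : Type*} [MeasurableSpace α] [NormedAddCommGroup E]
    {μ : Measure α} {g : α → E} (hg : MemLp g 2 μ) (hg0 : ¬g =ᵐ[μ] 0) :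
    0 < ∫ a, ‖g a‖ ^ 2 ∂μ := by
  refine (integral_nonneg fun a => by positivity).lt_of_ne fun h => hg0 ?_
  have := (integral_eq_zero_iff_of_nonneg (fun a => by positivity)
    (hg.integrable_norm_pow two_ne_zero)).1 h.symm
  filter_upwards [this] with a ha
  simpa using ha

lemma ae_eq_zero_of_smul_ae_eq_zero {E : Type*} [NormedAddCommGroup E] [NormedSpace ℝ E]
    {g : ℝ → E} (h : (fun x => x • g x) =ᵐ[volume] 0) : g =ᵐ[volume] 0 := by
  filter_upwards [h, volume.ae_ne 0] with x hx hx0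
  exact (smul_eq_zero.1 hx).resolve_left hx0

lemma div_rpow_add_half_mul {a b : ℝ} (ha : 0 < a) (hb : 0 < b) (s : ℝ) :
    (b / a) ^ (s + 1 / 2) * a = a ^ (1 / 2 - s) * b ^ (1 / 2 + s) := by
  rw [div_rpow hb.le ha.le, show 1 / 2 - s = 1 - (s + 1 / 2) by ring, rpow_sub ha, rpow_one,
    add_comm (1 / 2) s]
  ring

lemma div_rpow_sub_half_mul {a b : ℝ} (ha : 0 < a) (hb : 0 < b) (s : ℝ) :
    (b / a) ^ (s - 1 / 2) * b = a ^ (1 / 2 - s) * b ^ (1 / 2 + s) := by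
  rw [div_rpow hb.le ha.le, show 1 / 2 - s = -(s - 1 / 2) by ring, rpow_neg ha.le,
    show 1 / 2 + s = s - 1 / 2 + 1 by ring, rpow_add_one hb.ne']
  ring

theorem integral_abs_rpow_mul_norm_le {E : Type*} [NormedAddCommGroup E] [NormedSpace ℝ E]
    {g : ℝ → E} {s : ℝ} (hs0 : 0 ≤ s) (hs1 : s < 1 / 2) (hg : MemLp g 2)
    (hxg : MemLp (fun x => x • g x) 2) :
    ∫ x, |x| ^ s * ‖g x‖ ≤ (√2 + √(2 / (1 - 2 * s))) *
      √(∫ x, ‖g x‖ ^ 2) ^ (1 / 2 - s) * √(∫ x, ‖x • g x‖ ^ 2) ^ (1 / 2 + s) := by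
  by_cases hint : Integrable fun x => |x| ^ s * ‖g x‖
  swap
  · rw [integral_undef hint]; positivity
  by_cases hg0 : g =ᵐ[volume] 0
  · rw [integral_eq_zero_of_ae (by filter_upwards [hg0] with x hx; simp [hx])]; positivity
  set A := √(∫ x, ‖g x‖ ^ 2)
  set B := √(∫ x, ‖x • g x‖ ^ 2)
  have hA : 0 < A := sqrt_pos.2 (integral_norm_sq_pos hg hg0)
  have hB : 0 < B :=
    sqrt_pos.2 (integral_norm_sq_pos hxg fun h => hg0 (ae_eq_zero_of_smul_ae_eq_zero h))
  rw [← integral_add_compl (measurableSet_closedBall (x := 0) (ε := B / A)) hint]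
  calc _ ≤ √2 * (B / A) ^ (s + 1 / 2) * A + √(2 / (1 - 2 * s)) * (B / A) ^ (s - 1 / 2) * B :=
        add_le_add (setIntegral_closedBall_abs_rpow_mul_norm_le hs0 (by positivity) hg)
          (setIntegral_compl_closedBall_abs_rpow_mul_norm_le hs1 (by positivity) hxg)
    _ = _ := by
        rw [mul_assoc √2, div_rpow_add_half_mul hA hB, mul_assoc (√_), div_rpow_sub_half_mul hA hB]
        ring

theorem weighted_L1_interpolation (ρ : ℝ) (hρ0 : 0 ≤ ρ) (hρ1 : ρ < 1 / 4) :
    ∃ C > (0 : ℝ), ∀ f : SchwartzMap ℝ ℂ,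
      (∫ x : ℝ, |x| ^ (2 * ρ) * ‖f x‖) ≤
        C * ((∫ x : ℝ, ‖f x‖ ^ 2) ^ ((1 : ℝ) / 2)) ^ ((1 : ℝ) / 2 - 2 * ρ) *
          ((∫ x : ℝ, ‖(x : ℂ) * f x‖ ^ 2) ^ ((1 : ℝ) / 2)) ^ ((1 : ℝ) / 2 + 2 * ρ) := by
  refine ⟨√2 + √(2 / (1 - 2 * (2 * ρ))), by positivity, fun f => ?_⟩
  have hxf : MemLp (fun x : ℝ => x • f x) 2 := by
    have h := (SchwartzMap.smulLeftCLM ℂ Complex.ofReal f).memLp 2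
    rw [SchwartzMap.smulLeftCLM_apply Function.Complex.hasTemperateGrowth_ofReal] at h
    simpa only [Complex.real_smul, smul_eq_mul] using h
  simpa only [← sqrt_eq_rpow, Complex.real_smul] using
    integral_abs_rpow_mul_norm_le (by positivity) (by linarith) (f.memLp 2) hxf
end
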